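/- arXiv:2401.14380 — 8 statements merged into one kernel-verified Lean document; each statement's English description precedes it below -/
import Mathlib

section
/- Let Γ be a simple graph on [n]. For every w ∈ S_n and every spline ρ on Γ, the function v ↦ w(ρ(w⁻¹v)) (where w acts on the polynomial ρ(w⁻¹v) by permuting variables) is again a spline on Γ; that is, the dot action of S_n preserves Splines(Γ). -/
open MvPolynomial

/-- A spline on a simple graph `Γ` on `[n]`. -/
def IsSpline {n : ℕ} (Γ : SimpleGraph (Fin n))
    (ρ : Equiv.Perm (Fin n) → MvPolynomial (Fin n) ℂ) : Prop :=
  ∀ (w : Equiv.Perm (Fin n)) (i j : Fin n), Γ.Adj i j →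
    ρ w - ρ (w * Equiv.swap i j) ∈
      Ideal.span {(X (w i) - X (w j) : MvPolynomial (Fin n) ℂ)}

/-- The dot action of `S_n` on functions `S_n → ℂ[t]`: `(w·ρ)(v) = w(ρ(w⁻¹ v))`, where
`w` acts on polynomials by permuting variables. -/
noncomputable def dotAction {n : ℕ} (w : Equiv.Perm (Fin n))
    (ρ : Equiv.Perm (Fin n) → MvPolynomial (Fin n) ℂ) :
    Equiv.Perm (Fin n) → MvPolynomial (Fin n) ℂ :=
  fun v => rename (⇑w) (ρ (w⁻¹ * v))

theorem dotAction_sub_dotAction_mul_swap {n : ℕ} (w v : Equiv.Perm (Fin n))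
    (ρ : Equiv.Perm (Fin n) → MvPolynomial (Fin n) ℂ) (i j : Fin n) :
    dotAction w ρ v - dotAction w ρ (v * Equiv.swap i j) =
      rename (⇑w) (ρ (w⁻¹ * v) - ρ (w⁻¹ * v * Equiv.swap i j)) := by
  simp only [dotAction, map_sub, mul_assoc]

theorem rename_X_sub_X_inv_mul {σ R : Type*} [CommRing R] (w v : Equiv.Perm σ) (i j : σ) :
    rename (⇑w) (X ((w⁻¹ * v) i) - X ((w⁻¹ * v) j) : MvPolynomial σ R) =
      X (v i) - X (v j) := by
  simp only [map_sub, rename_X, Equiv.Perm.mul_apply, Equiv.Perm.coe_inv, Equiv.apply_symm_apply]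

/-- The dot action of `S_n` preserves the set of splines on `Γ`. -/
theorem dotAction_isSpline {n : ℕ} (Γ : SimpleGraph (Fin n)) (w : Equiv.Perm (Fin n))
    (ρ : Equiv.Perm (Fin n) → MvPolynomial (Fin n) ℂ) (hρ : IsSpline Γ ρ) :
    IsSpline Γ (dotAction w ρ) := by
  intro v i j hij
  have hdvd := map_dvd (rename ⇑w) (Ideal.mem_span_singleton.mp (hρ (w⁻¹ * v) i j hij))
  rw [Ideal.mem_span_singleton, dotAction_sub_dotAction_mul_swap,
    ← rename_X_sub_X_inv_mul w v i j]
  exact hdvd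
end

section
/- Let Γ and Γ' be simple graphs on [n] and let ω ∈ S_n be a graph isomorphism from Γ to Γ' (i.e., {i,j} ∈ E(Γ) iff {ω(i),ω(j)} ∈ E(Γ')). Define Ω by Ω(ρ)(v) := ω(ρ(ω⁻¹vω)) for ρ : S_n → ℂ[t] and v ∈ S_n. Then Ω maps Splines(Γ) into Splines(Γ'), and Ω : Splines(Γ) → Splines(Γ') is a ring isomorphism (with respect to pointwise addition and multiplication). -/
open MvPolynomial

/-- The map `Ω` induced by a permutation `ω`: `Ω(ρ)(v) = ω(ρ(ω⁻¹ v ω))`. -/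
noncomputable def OmegaMap {n : ℕ} (ω : Equiv.Perm (Fin n))
    (ρ : Equiv.Perm (Fin n) → MvPolynomial (Fin n) ℂ) :
    Equiv.Perm (Fin n) → MvPolynomial (Fin n) ℂ :=
  fun v => rename (⇑ω) (ρ (ω⁻¹ * v * ω))

section OmegaMap

variable {n : ℕ}

/-- Conjugation by `ω` turns `v * (i j)` into `u * (ω⁻¹ i, ω⁻¹ j)` with `u = ω⁻¹ v ω`, and
`rename ω` carries the ideal `⟨t_{u(ω⁻¹ i)} - t_{u(ω⁻¹ j)}⟩` into `⟨t_{v i} - t_{v j}⟩`. -/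
theorem isSpline_omegaMap {Γ Γ' : SimpleGraph (Fin n)} {ω : Equiv.Perm (Fin n)}
    (hω : ∀ i j, Γ'.Adj (ω i) (ω j) → Γ.Adj i j)
    {ρ : Equiv.Perm (Fin n) → MvPolynomial (Fin n) ℂ} (hρ : IsSpline Γ ρ) :
    IsSpline Γ' (OmegaMap ω ρ) := by
  intro v i j hij
  have hadj : Γ.Adj (ω⁻¹ i) (ω⁻¹ j) := hω _ _ (by simpa using hij)
  have hconj : ω⁻¹ * (v * Equiv.swap i j) * ω
      = ω⁻¹ * v * ω * Equiv.swap (ω⁻¹ i) (ω⁻¹ j) := by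
    have hswap : Equiv.swap (ω⁻¹ i) (ω⁻¹ j) = ω⁻¹ * Equiv.swap i j * ω := by
      simpa using Equiv.swap_apply_apply ω⁻¹ i j
    rw [hswap]
    group
  have hmem := Ideal.mem_map_of_mem (rename ω) (hρ (ω⁻¹ * v * ω) _ _ hadj)
  simpa [OmegaMap, hconj, Ideal.map_span] using hmem

theorem omegaMap_inv_omegaMap (ω : Equiv.Perm (Fin n))
    (ρ : Equiv.Perm (Fin n) → MvPolynomial (Fin n) ℂ) :
    OmegaMap ω⁻¹ (OmegaMap ω ρ) = ρ := by
  funext v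
  simp [OmegaMap, rename_rename, mul_assoc]

theorem omegaMap_omegaMap_inv (ω : Equiv.Perm (Fin n))
    (ρ : Equiv.Perm (Fin n) → MvPolynomial (Fin n) ℂ) :
    OmegaMap ω (OmegaMap ω⁻¹ ρ) = ρ := by
  simpa using omegaMap_inv_omegaMap ω⁻¹ ρ

noncomputable def omegaRingEquiv (ω : Equiv.Perm (Fin n)) :
    (Equiv.Perm (Fin n) → MvPolynomial (Fin n) ℂ) ≃+*
      (Equiv.Perm (Fin n) → MvPolynomial (Fin n) ℂ) where
  toFun := OmegaMap ω
  invFun := OmegaMap ω⁻¹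
  left_inv := omegaMap_inv_omegaMap ω
  right_inv := omegaMap_omegaMap_inv ω
  map_mul' ρ σ := by funext v; simp [OmegaMap]
  map_add' ρ σ := by funext v; simp [OmegaMap]

end OmegaMap

/-- If `ω` is a graph isomorphism from `Γ` to `Γ'`, then `Ω` maps splines on `Γ` to splines
on `Γ'`, and `Ω : Splines(Γ) → Splines(Γ')` is a ring isomorphism: it is additive,
multiplicative, unital (with respect to pointwise operations) and restricts to a bijection
from the set of splines on `Γ` onto the set of splines on `Γ'`. -/
theorem OmegaMap_ring_iso {n : ℕ} (Γ Γ' : SimpleGraph (Fin n)) (ω : Equiv.Perm (Fin n))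
    (hω : ∀ i j : Fin n, Γ.Adj i j ↔ Γ'.Adj (ω i) (ω j)) :
    (∀ ρ, IsSpline Γ ρ → IsSpline Γ' (OmegaMap ω ρ)) ∧
    (∀ ρ σ : Equiv.Perm (Fin n) → MvPolynomial (Fin n) ℂ,
        OmegaMap ω (ρ + σ) = OmegaMap ω ρ + OmegaMap ω σ) ∧
    (∀ ρ σ : Equiv.Perm (Fin n) → MvPolynomial (Fin n) ℂ,
        OmegaMap ω (ρ * σ) = OmegaMap ω ρ * OmegaMap ω σ) ∧
    (OmegaMap ω (1 : Equiv.Perm (Fin n) → MvPolynomial (Fin n) ℂ) = 1) ∧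
    Set.BijOn (OmegaMap ω) {ρ | IsSpline Γ ρ} {ρ | IsSpline Γ' ρ} := by
  have hforward (ρ) : IsSpline Γ ρ → IsSpline Γ' (OmegaMap ω ρ) :=
    isSpline_omegaMap fun i j => (hω i j).2
  have hbackward (τ) : IsSpline Γ' τ → IsSpline Γ (OmegaMap ω⁻¹ τ) :=
    isSpline_omegaMap fun i j h => by simpa using (hω _ _).1 h
  refine ⟨hforward, map_add (omegaRingEquiv ω), map_mul (omegaRingEquiv ω),
    map_one (omegaRingEquiv ω), ?_⟩
  exact Set.InvOn.bijOn
    ⟨fun ρ _ => omegaMap_inv_omegaMap ω ρ, fun τ _ => omegaMap_omegaMap_inv ω τ⟩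
    hforward hbackward
end

section
/- Let Γ and Γ' be simple graphs on [n], let ω ∈ S_n be a graph isomorphism from Γ to Γ', and let Ω : Splines(Γ) → Splines(Γ') be defined by Ω(ρ)(v) = ω(ρ(ω⁻¹vω)). Then Ω intertwines the dot action of S_n with the ω-twisted dot action: for every u ∈ S_n and every spline ρ on Γ, Ω(u·ρ) = (ωuω⁻¹)·Ω(ρ). -/
open MvPolynomial

theorem OmegaMap_intertwines_dotAction_general {n : ℕ}
    (ω : Equiv.Perm (Fin n))
    (u : Equiv.Perm (Fin n))
    (ρ : Equiv.Perm (Fin n) → MvPolynomial (Fin n) ℂ) :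
    OmegaMap ω (dotAction u ρ) = dotAction (ω * u * ω⁻¹) (OmegaMap ω ρ) := by
  funext v
  have hvariables : ⇑ω ∘ ⇑u = ⇑(ω * u * ω⁻¹) ∘ ⇑ω := by
    ext i
    simp
  have hargument : ω⁻¹ * ((ω * u * ω⁻¹)⁻¹ * v) * ω = u⁻¹ * (ω⁻¹ * v * ω) := by
    group
  simp only [OmegaMap, dotAction, rename_rename, hvariables, hargument]

/-- If `ω : Γ → Γ'` is a graph isomorphism, then `Ω` intertwines the dot action of `S_n`
with the `ω`-twisted dot action: `Ω(u·ρ) = (ωuω⁻¹)·Ω(ρ)` for every `u ∈ S_n` and every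
spline `ρ` on `Γ`. -/
theorem OmegaMap_intertwines_dotAction {n : ℕ} (Γ Γ' : SimpleGraph (Fin n))
    (ω : Equiv.Perm (Fin n))
    (hω : ∀ i j : Fin n, Γ.Adj i j ↔ Γ'.Adj (ω i) (ω j))
    (u : Equiv.Perm (Fin n))
    (ρ : Equiv.Perm (Fin n) → MvPolynomial (Fin n) ℂ) (hρ : IsSpline Γ ρ) :
    OmegaMap ω (dotAction u ρ) = dotAction (ω * u * ω⁻¹) (OmegaMap ω ρ) :=
  OmegaMap_intertwines_dotAction_general ω u ρ
end

section
/- Let Γ be a connected simple graph on [n]. The ℂ[t]-submodule of Splines(Γ) (under the left action f.ρ = (w ↦ f·ρ(w))) generated by the set of splines ρ such that every value ρ(w) is a polynomial of degree at most 1 is a free ℂ[t]-module. -/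
open MvPolynomial

/-!
Let `L` be the `ℂ`-space of splines of degree at most one, and `b` a `ℂ`-basis of a complement
in `L` of the constant elements of `L`. Then `{1} ∪ b` is a `ℂ[t]`-basis of the span of `L`: it
spans because constants are `ℂ[t]`-multiples of `1`. For independence, suppose `∑ aₖ bₖ` is
constant. Across the edge `{i, j}` at `w`, each `bₖ` jumps by `cₖ (t_{w i} - t_{w j})` with
`cₖ ∈ ℂ`, so `∑ aₖ cₖ = 0`. Taking the `μ`-th coefficient of every `aₖ`, the `ℂ`-combination
`∑ coeff_μ(aₖ) bₖ` therefore has no jump across any edge; as the edge transpositions of a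
connected graph generate `Sₙ`, it is constant, hence zero, and so every `coeff_μ(aₖ)` vanishes.
-/

namespace MvPolynomial

variable {σ R : Type*} [CommRing R]

theorem totalDegree_X_sub_X [Nontrivial R] {i j : σ} (h : i ≠ j) :
    (X i - X j : MvPolynomial σ R).totalDegree = 1 :=
  ((isHomogeneous_X R i).sub (isHomogeneous_X R j)).totalDegree
    (sub_ne_zero.mpr ((X_injective (R := R)).ne h))

theorem exists_eq_C_mul_of_mem_span_singleton [IsDomain R] {p q : MvPolynomial σ R}
    (hp : p ∈ Ideal.span {q}) (hdeg : p.totalDegree ≤ q.totalDegree) :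
    ∃ c, p = C c * q := by
  obtain ⟨r, rfl⟩ := Ideal.mem_span_singleton'.mp hp
  rcases eq_or_ne r 0 with rfl | hr
  · exact ⟨0, by simp⟩
  rcases eq_or_ne q 0 with rfl | hq
  · exact ⟨0, by simp⟩
  rw [totalDegree_mul_of_isDomain hr hq] at hdeg
  exact ⟨coeff 0 r, by rw [← totalDegree_eq_zero_iff_eq_C.mp (by omega)]⟩

theorem sum_coeff_smul_eq_zero_of_sum_mul_eq_zero [IsDomain R] {κ : Type*}
    {q : MvPolynomial σ R} (hq : q ≠ 0) {s : Finset κ} {a δ : κ → MvPolynomial σ R}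
    (hδ : ∀ k, ∃ c, δ k = C c * q) (h : ∑ k ∈ s, a k * δ k = 0) (μ : σ →₀ ℕ) :
    ∑ k ∈ s, coeff μ (a k) • δ k = 0 := by
  choose c hc using hδ
  obtain rfl : δ = fun k => C (c k) * q := _root_.funext hc
  have hsum : ∑ k ∈ s, C (c k) * a k = 0 := by
    refine (mul_eq_zero.mp ?_).resolve_right hq
    rw [← h, Finset.sum_mul]
    exact Finset.sum_congr rfl fun k _ => by ring
  have hcoeff : ∑ k ∈ s, c k * coeff μ (a k) = 0 := by
    simpa only [coeff_sum, coeff_C_mul, coeff_zero] using congrArg (coeff μ) hsum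
  calc ∑ k ∈ s, coeff μ (a k) • (C (c k) * q) = C (∑ k ∈ s, c k * coeff μ (a k)) * q := by
        simp only [smul_eq_C_mul, map_sum, map_mul, Finset.sum_mul]
        exact Finset.sum_congr rfl fun k _ => by ring
    _ = 0 := by rw [hcoeff, map_zero, zero_mul]

end MvPolynomial

namespace SimpleGraph

open Equiv

variable {V : Type*} [DecidableEq V] {G : SimpleGraph V}

theorem Connected.closure_swap_adj_eq_top [Finite V] (hG : G.Connected) :
    Subgroup.closure {σ : Perm V | ∃ i j, G.Adj i j ∧ swap i j = σ} = ⊤ := by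
  set S := {σ : Perm V | ∃ i j, G.Adj i j ∧ swap i j = σ}
  have hS : ∀ σ ∈ S, σ.IsSwap := by
    rintro _ ⟨i, j, hij, rfl⟩
    exact ⟨i, j, hij.ne, rfl⟩
  have orbit_of_walk : ∀ {a b : V}, G.Walk a b → a ∈ MulAction.orbit (Subgroup.closure S) b := by
    intro a b p
    induction p with
    | nil => exact MulAction.mem_orbit_self _
    | @cons a x b hax _ ih =>
      obtain ⟨g, hg : (g : Perm V) • b = x⟩ := ih
      refine ⟨⟨swap a x, Subgroup.subset_closure ⟨a, x, hax, rfl⟩⟩ * g, ?_⟩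
      change (swap a x * (g : Perm V)) • b = a
      rw [mul_smul, hg]
      exact swap_apply_right a x
  rw [Subgroup.eq_top_iff']
  intro f
  rw [mem_closure_isSwap hS]
  exact ⟨Set.toFinite _, fun x => orbit_of_walk (hG (f x) x).some⟩

theorem Connected.apply_eq_apply_one [Finite V] {α : Type*} (hG : G.Connected)
    {H : Perm V → α} (hH : ∀ w i j, G.Adj i j → H (w * swap i j) = H w) (w : Perm V) :
    H w = H 1 := by
  have hw : w ∈ Subgroup.closure {σ : Perm V | ∃ i j, G.Adj i j ∧ swap i j = σ} := by
    rw [hG.closure_swap_adj_eq_top]; trivial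
  induction hw using Subgroup.closure_induction_right with
  | one => rfl
  | mul_right x _ _ hy ih =>
    obtain ⟨i, j, hij, rfl⟩ := hy
    rw [hH x i j hij, ih]
  | mul_inv_cancel x _ _ hy ih =>
    obtain ⟨i, j, hij, rfl⟩ := hy
    rw [swap_inv, hH x i j hij, ih]

end SimpleGraph

open Submodule in
theorem linearIndependent_sum_elim_of_linearIndependent_mod_span {R M κ : Type*} [Ring R]
    [IsDomain R] [AddCommGroup M] [Module R M] [Module.IsTorsionFree R M] {x : M} (hx : x ≠ 0)
    {v : κ → M}
    (hv : ∀ (s : Finset κ) (a : κ → R), (∑ k ∈ s, a k • v k) ∈ span R {x} → ∀ k ∈ s, a k = 0) :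
    LinearIndependent R (Sum.elim (fun _ : Unit => x) v) := by
  refine (linearIndependent_unique_iff.mpr hx).sum_type
    (linearIndependent_iff'.mpr fun s a h => hv s a (h ▸ zero_mem _)) ?_
  rw [Set.range_const, disjoint_def]
  intro y hy hy'
  obtain ⟨c, rfl⟩ := Finsupp.mem_span_range_iff_exists_finsupp.mp hy'
  exact Finset.sum_eq_zero fun k hk => by simp [hv _ _ hy k hk]

theorem Submodule.exists_linearIndependent_disjoint_le_sup {K V : Type*} [DivisionRing K]
    [AddCommGroup V] [Module K V] (L D : Submodule K V) :
    ∃ b ⊆ (L : Set V), LinearIndependent K ((↑) : b → V) ∧ Disjoint D (span K b) ∧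
      L ≤ D ⊔ span K b := by
  obtain ⟨C, hC⟩ := (D ⊓ L).exists_isCompl
  obtain ⟨b, hbCL, hspan, hli⟩ := exists_linearIndependent K ((C ⊓ L : Submodule K V) : Set V)
  rw [span_eq] at hspan
  refine ⟨b, hbCL.trans inf_le_right, hli, ?_, ?_⟩
  · rw [hspan, disjoint_iff, ← inf_assoc, inf_right_comm, hC.inf_eq_bot]
  · calc L = (D ⊓ L ⊔ C) ⊓ L := by rw [hC.sup_eq_top, top_inf_eq]
      _ = D ⊓ L ⊔ C ⊓ L := sup_inf_assoc_of_le C inf_le_right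
      _ ≤ D ⊔ span K b := by rw [hspan]; exact sup_le_sup_right inf_le_left _

theorem Pi.mem_span_one_iff {ι R : Type*} [CommSemiring R] (ρ : ι → R) (i₀ : ι) :
    ρ ∈ Submodule.span R {1} ↔ ∀ i, ρ i = ρ i₀ := by
  rw [Submodule.mem_span_singleton]
  constructor
  · rintro ⟨a, rfl⟩ i
    simp
  · intro h
    exact ⟨ρ i₀, funext fun i => by simp [h i]⟩

section Splines

open Equiv

variable {n : ℕ}

local notation "ℂ[t]" => MvPolynomial (Fin n) ℂ

noncomputable def splines (Γ : SimpleGraph (Fin n)) : Submodule ℂ[t] (Perm (Fin n) → ℂ[t]) where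
  carrier := {ρ | IsSpline Γ ρ}
  add_mem' {ρ ρ'} hρ hρ' w i j hij := by
    simpa only [Pi.add_apply, add_sub_add_comm] using
      Ideal.add_mem _ (hρ w i j hij) (hρ' w i j hij)
  zero_mem' w i j _ := by simp
  smul_mem' f ρ hρ w i j hij := by
    simpa only [Pi.smul_apply, smul_eq_mul, ← mul_sub] using Ideal.mul_mem_left _ f (hρ w i j hij)

noncomputable def linearSplines (Γ : SimpleGraph (Fin n)) : Submodule ℂ (Perm (Fin n) → ℂ[t]) :=
  (splines Γ).restrictScalars ℂ ⊓ Submodule.pi Set.univ fun _ => restrictTotalDegree (Fin n) ℂ 1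

variable {Γ : SimpleGraph (Fin n)}

theorem mem_linearSplines {ρ : Perm (Fin n) → ℂ[t]} :
    ρ ∈ linearSplines Γ ↔ IsSpline Γ ρ ∧ ∀ w, (ρ w).totalDegree ≤ 1 := by
  simp only [linearSplines, Submodule.mem_inf, Submodule.restrictScalars_mem, Submodule.mem_pi,
    Set.mem_univ, true_implies, mem_restrictTotalDegree]
  rfl

theorem coe_linearSplines :
    (linearSplines Γ : Set (Perm (Fin n) → ℂ[t])) =
      {ρ | IsSpline Γ ρ ∧ ∀ w, (ρ w).totalDegree ≤ 1} :=
  Set.ext fun _ => mem_linearSplines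

theorem one_mem_linearSplines : (1 : Perm (Fin n) → ℂ[t]) ∈ linearSplines Γ :=
  mem_linearSplines.mpr ⟨fun w i j _ => by simp, fun w => by simp⟩

theorem exists_sub_mul_swap_eq_C_mul {ρ : Perm (Fin n) → ℂ[t]} (hρ : ρ ∈ linearSplines Γ)
    {i j : Fin n} (hij : Γ.Adj i j) (w : Perm (Fin n)) :
    ∃ c, ρ w - ρ (w * swap i j) = C c * (X (w i) - X (w j)) := by
  obtain ⟨hspline, hdeg⟩ := mem_linearSplines.mp hρ
  refine exists_eq_C_mul_of_mem_span_singleton (hspline w i j hij) ?_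
  rw [totalDegree_X_sub_X (w.injective.ne hij.ne)]
  exact (totalDegree_sub _ _).trans (max_le (hdeg _) (hdeg _))

theorem sum_coeff_smul_mem_span_one {κ : Type*} {v : κ → Perm (Fin n) → ℂ[t]} {s : Finset κ}
    {a : κ → ℂ[t]} (hΓ : Γ.Connected) (hv : ∀ k, v k ∈ linearSplines Γ)
    (h : (∑ k ∈ s, a k • v k) ∈ Submodule.span ℂ[t] {1}) (μ : Fin n →₀ ℕ) :
    (∑ k ∈ s, coeff μ (a k) • v k) ∈ Submodule.span ℂ[t] {1} := by
  rw [Pi.mem_span_one_iff _ 1] at h ⊢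
  refine hΓ.apply_eq_apply_one fun w i j hij => ?_
  have hjump := sum_coeff_smul_eq_zero_of_sum_mul_eq_zero (s := s) (a := a)
    (sub_ne_zero.mpr ((X_injective (R := ℂ)).ne (w.injective.ne hij.ne)))
    (fun k => exists_sub_mul_swap_eq_C_mul (hv k) hij w) ?_ μ
  · rw [eq_comm, ← sub_eq_zero]
    simpa only [Finset.sum_apply, Pi.smul_apply, smul_sub, Finset.sum_sub_distrib] using hjump
  · simpa only [Finset.sum_apply, Pi.smul_apply, smul_eq_mul, mul_sub, Finset.sum_sub_distrib,
      sub_eq_zero] using (h w).trans (h (w * swap i j)).symm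

theorem eq_zero_of_sum_smul_mem_span_one {κ : Type*} {v : κ → Perm (Fin n) → ℂ[t]}
    {s : Finset κ} {a : κ → ℂ[t]} (hΓ : Γ.Connected) (hv : ∀ k, v k ∈ linearSplines Γ)
    (hli : LinearIndependent ℂ v)
    (hdisj : Disjoint ((Submodule.span ℂ[t] {1}).restrictScalars ℂ)
      (Submodule.span ℂ (Set.range v)))
    (h : (∑ k ∈ s, a k • v k) ∈ Submodule.span ℂ[t] {1}) : ∀ k ∈ s, a k = 0 := by
  intro k hk
  ext μ
  have hslice : ∑ k ∈ s, coeff μ (a k) • v k = 0 :=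
    Submodule.disjoint_def.mp hdisj _ (sum_coeff_smul_mem_span_one hΓ hv h μ)
      (Submodule.sum_mem _ fun k _ => Submodule.smul_mem _ _ (Submodule.subset_span ⟨k, rfl⟩))
  exact linearIndependent_iff'.mp hli s _ hslice k hk

theorem span_range_sum_elim_one {b : Set (Perm (Fin n) → ℂ[t])}
    (hbL : b ⊆ linearSplines Γ)
    (hle : linearSplines Γ ≤ (Submodule.span ℂ[t] {1}).restrictScalars ℂ ⊔ Submodule.span ℂ b) :
    Submodule.span ℂ[t] (Set.range (Sum.elim (fun _ : Unit => 1) ((↑) : b → Perm (Fin n) → ℂ[t])))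
      = Submodule.span ℂ[t] (linearSplines Γ) := by
  rw [Set.Sum.elim_range, Set.range_const, Subtype.range_coe, Submodule.span_union]
  refine le_antisymm ?_ (Submodule.span_le.mpr fun ρ hρ => ?_)
  · exact sup_le (Submodule.span_mono (by simpa using one_mem_linearSplines))
      (Submodule.span_mono hbL)
  · obtain ⟨d, hd, y, hy, rfl⟩ := Submodule.mem_sup.mp (hle hρ)
    exact add_mem (Submodule.mem_sup_left hd)
      (Submodule.mem_sup_right (Submodule.span_le_restrictScalars ℂ ℂ[t] _ hy))

end Splines

/-- For a connected graph `Γ` on `[n]`, the `ℂ[t]`-submodule of splines generated (under the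
left action, i.e. the pointwise module structure) by the splines all of whose values have
degree at most `1` is a free `ℂ[t]`-module. -/
theorem span_linear_splines_free {n : ℕ} (Γ : SimpleGraph (Fin n)) (hΓ : Γ.Connected) :
    Module.Free (MvPolynomial (Fin n) ℂ)
      ↥(Submodule.span (MvPolynomial (Fin n) ℂ)
        {ρ : Equiv.Perm (Fin n) → MvPolynomial (Fin n) ℂ |
          IsSpline Γ ρ ∧ ∀ w, (ρ w).totalDegree ≤ 1}) := by
  rw [← coe_linearSplines]
  obtain ⟨b, hbL, hli, hdisj, hle⟩ := (linearSplines Γ).exists_linearIndependent_disjoint_le_sup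
    ((Submodule.span (MvPolynomial (Fin n) ℂ) {1}).restrictScalars ℂ)
  rw [← Subtype.range_coe (s := b)] at hdisj
  have hind := linearIndependent_sum_elim_of_linearIndependent_mod_span one_ne_zero fun _ _ =>
    eq_zero_of_sum_smul_mem_span_one hΓ (fun k => hbL k.2) hli hdisj
  rw [← span_range_sum_elim_one hbL hle]
  exact Module.Free.of_basis (Module.Basis.span hind)
end

section
/- Let Γ be a connected simple graph on [n], let T be a spanning tree of Γ, and let B ⊆ E(T). For w ∈ S_n, let I_B^w denote the ideal of ℂ[t] generated by {t_{w(i)} − t_{w(j)} : {i,j} ∈ B}, and let ⟨B⟩ denote the subgroup of S_n generated by the transpositions corresponding to edges of B. If v ∈ w⟨B⟩ and ρ is a spline on Γ, then ρ(w) − ρ(v) ∈ I_B^w. -/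
/-!
Let `I = I_B^w` and let `f k` be the class of `t_{w(k)}` modulo `I`. Each transposition of `B`
swaps two indices on which `f` agrees, so every `g ∈ ⟨B⟩` satisfies `f ∘ g = f`. Writing
`w⁻¹v = s₁ ⋯ s_m` with `s_i` transpositions of `B`, each step `wg ↦ wgs` changes `ρ` by a
multiple of `t_{wg(i)} − t_{wg(j)}` for the edge `{i,j}` of `s`, and `f ∘ g = f` says this
generator is congruent modulo `I` to `t_{w(i)} − t_{w(j)} ∈ I`.
-/

open MvPolynomial

namespace Equiv.Perm

variable {α : Type*} [DecidableEq α]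

def reflectionSubgroup (B : Set (α × α)) : Subgroup (Perm α) :=
  Subgroup.closure {σ | ∃ p ∈ B, σ = swap p.1 p.2}

variable {B : Set (α × α)}

theorem comp_eq_of_mem_reflectionSubgroup {β : Type*} {f : α → β}
    (hf : ∀ p ∈ B, f p.1 = f p.2) {g : Perm α} (hg : g ∈ reflectionSubgroup B) :
    f ∘ g = f := by
  induction hg using Subgroup.closure_induction with
  | mem σ hσ =>
    obtain ⟨p, hp, rfl⟩ := hσ
    rw [comp_swap_eq_update, hf p hp, Function.update_eq_self, ← hf p hp, Function.update_eq_self]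
  | one => rfl
  | mul g₁ g₂ _ _ h₁ h₂ => rw [coe_mul, ← Function.comp_assoc, h₁, h₂]
  | inv g _ h => rw [coe_inv, comp_symm_eq, h]

theorem sub_mem_span_of_mem_reflectionSubgroup {R : Type*} [CommRing R]
    (x : α → R) (ρ : Perm α → R)
    (hρ : ∀ u, ∀ p ∈ B, ρ u - ρ (u * swap p.1 p.2) ∈ Ideal.span {x (u p.1) - x (u p.2)})
    (w : Perm α) {g : Perm α} (hg : g ∈ reflectionSubgroup B) :
    ρ w - ρ (w * g) ∈ Ideal.span {r | ∃ p ∈ B, r = x (w p.1) - x (w p.2)} := by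
  set I := Ideal.span {r | ∃ p ∈ B, r = x (w p.1) - x (w p.2)}
  set f : α → R ⧸ I := Ideal.Quotient.mk I ∘ x ∘ w
  have hf : ∀ p ∈ B, f p.1 = f p.2 := fun p hp =>
    Ideal.Quotient.eq.2 (Ideal.subset_span ⟨p, hp, rfl⟩)
  have step : ∀ g ∈ reflectionSubgroup B, ∀ p ∈ B,
      ρ (w * g) - ρ (w * g * swap p.1 p.2) ∈ I := by
    intro g hg p hp
    have hfg := comp_eq_of_mem_reflectionSubgroup hf hg
    refine Ideal.span_singleton_le_iff_mem _ |>.2 (Ideal.Quotient.eq.1 ?_) (hρ _ p hp)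
    exact (congrFun hfg p.1).trans ((hf p hp).trans (congrFun hfg p.2).symm)
  induction hg using Subgroup.closure_induction_right with
  | one => simp
  | mul_right g hg s hs ih =>
    obtain ⟨p, hp, rfl⟩ := hs
    simpa [← mul_assoc] using I.add_mem ih (step g hg p hp)
  | mul_inv_cancel g hg s hs ih =>
    obtain ⟨p, hp, rfl⟩ := hs
    simpa [← mul_assoc] using I.add_mem ih (step g hg p hp)

end Equiv.Perm

theorem spline_diff_mem_coset_ideal_general {n : ℕ} (Γ T : SimpleGraph (Fin n))
    (hTΓ : T ≤ Γ)
    (B : Set (Fin n × Fin n)) (hB : ∀ p ∈ B, T.Adj p.1 p.2)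
    (ρ : Equiv.Perm (Fin n) → MvPolynomial (Fin n) ℂ) (hρ : IsSpline Γ ρ)
    (w v : Equiv.Perm (Fin n))
    (hv : w⁻¹ * v ∈ Subgroup.closure
      {σ : Equiv.Perm (Fin n) | ∃ p ∈ B, σ = Equiv.swap p.1 p.2}) :
    ρ w - ρ v ∈ Ideal.span
      {f : MvPolynomial (Fin n) ℂ | ∃ p ∈ B, f = X (w p.1) - X (w p.2)} := by
  have h := Equiv.Perm.sub_mem_span_of_mem_reflectionSubgroup X ρ
    (fun u p hp => hρ u p.1 p.2 (hTΓ (hB p hp))) w hv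
  rwa [mul_inv_cancel_left] at h

/-- Let `T` be a spanning tree of the connected graph `Γ` and `B` a set of edges of `T`
(recorded as ordered pairs of adjacent vertices). If `v` lies in the left coset `w⟨B⟩` of
the reflection subgroup generated by the transpositions in `B`, then for any spline `ρ` on
`Γ` we have `ρ(w) − ρ(v) ∈ I_B^w = ⟨t_{w(i)} − t_{w(j)} : (i,j) ∈ B⟩`. -/
theorem spline_diff_mem_coset_ideal {n : ℕ} (Γ T : SimpleGraph (Fin n))
    (hΓ : Γ.Connected) (hTΓ : T ≤ Γ) (hT : T.IsTree)
    (B : Set (Fin n × Fin n)) (hB : ∀ p ∈ B, T.Adj p.1 p.2)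
    (ρ : Equiv.Perm (Fin n) → MvPolynomial (Fin n) ℂ) (hρ : IsSpline Γ ρ)
    (w v : Equiv.Perm (Fin n))
    (hv : w⁻¹ * v ∈ Subgroup.closure
      {σ : Equiv.Perm (Fin n) | ∃ p ∈ B, σ = Equiv.swap p.1 p.2}) :
    ρ w - ρ v ∈ Ideal.span
      {f : MvPolynomial (Fin n) ℂ | ∃ p ∈ B, f = X (w p.1) - X (w p.2)} :=
  spline_diff_mem_coset_ideal_general Γ T hTΓ B hB ρ hρ w v hv
end

section
/- Let Γ be a tree on [n] with edge set E. For B ⊆ E, the coset spline at the identity f̄_e^B and the coset spline at w, f̄_w^B := w · f̄_e^B (dot action), satisfy: (a) f̄_w^B is a spline on Γ for every w ∈ S_n and every B ⊆ E; and (b) if w⟨B⟩ = v⟨B⟩ (equal left cosets of the subgroup ⟨B⟩ generated by the transpositions in B), then f̄_w^B = f̄_v^B. -/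
open MvPolynomial

open Classical in
/-- The edges of `Γ`, recorded as ordered pairs `(i,j)` with `i < j`. -/
noncomputable def orderedEdges {n : ℕ} (Γ : SimpleGraph (Fin n)) :
    Finset (Fin n × Fin n) :=
  Finset.univ.filter fun p => Γ.Adj p.1 p.2 ∧ p.1 < p.2

/-- The subgroup `⟨B⟩` of `S_n` generated by the transpositions corresponding to the
edges in `B`. -/
def edgeSubgroup {n : ℕ} (B : Finset (Fin n × Fin n)) : Subgroup (Equiv.Perm (Fin n)) :=
  Subgroup.closure {σ : Equiv.Perm (Fin n) | ∃ p ∈ B, σ = Equiv.swap p.1 p.2}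

open Classical in
/-- The coset spline at the identity for `B ⊆ E(Γ)`:
`f̄_e^B(w) = ∏_{(i,j) ∈ E∖B, i<j} (t_{w(i)} − t_{w(j)})` if `w ∈ ⟨B⟩`, else `0`. -/
noncomputable def cosetSplineId {n : ℕ} (Γ : SimpleGraph (Fin n))
    (B : Finset (Fin n × Fin n)) :
    Equiv.Perm (Fin n) → MvPolynomial (Fin n) ℂ := fun w =>
  if w ∈ edgeSubgroup B then
    ∏ p ∈ orderedEdges Γ \ B, (X (w p.1) - X (w p.2))
  else 0

/-- The coset spline at `w`: `f̄_w^B = w · f̄_e^B`. -/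
noncomputable def cosetSpline {n : ℕ} (Γ : SimpleGraph (Fin n))
    (w : Equiv.Perm (Fin n)) (B : Finset (Fin n × Fin n)) :
    Equiv.Perm (Fin n) → MvPolynomial (Fin n) ℂ :=
  dotAction w (cosetSplineId Γ B)

/-!
Write `P = ∏_{(i,j) ∈ E∖B} (t_i − t_j)`, so that `f̄_e^B(u) = u(P)` on `⟨B⟩` and `0` off it.
For an edge `{i,j}` with transposition `s`, the difference `p − s(p)` of any polynomial is
divisible by `t_i − t_j`. If `s ∈ ⟨B⟩`, then `u` and `us` lie in `⟨B⟩` together and the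
spline difference is `u(P − s(P))`; if `s ∉ ⟨B⟩`, then `{i,j} ∈ E∖B`, so `t_i − t_j` divides
`P` and `s(P)`. The dot action preserves splines, and it fixes `f̄_e^B` under elements of `⟨B⟩`,
which gives coset invariance.
-/

theorem MvPolynomial.X_sub_X_dvd_sub_rename_swap {R σ : Type*} [CommRing R] [DecidableEq σ]
    (i j : σ) (p : MvPolynomial σ R) :
    (X i - X j : MvPolynomial σ R) ∣ p - rename (Equiv.swap i j) p := by
  set I := Ideal.span {(X i - X j : MvPolynomial σ R)}
  suffices h : (Ideal.Quotient.mkₐ R I).comp (rename (Equiv.swap i j)) = Ideal.Quotient.mkₐ R I by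
    rw [← Ideal.mem_span_singleton, ← Ideal.Quotient.eq, ← Ideal.Quotient.mkₐ_eq_mk R]
    exact (DFunLike.congr_fun h p).symm
  refine algHom_ext fun k => ?_
  simp only [AlgHom.comp_apply, rename_X, Ideal.Quotient.mkₐ_eq_mk, Ideal.Quotient.eq,
    Equiv.swap_apply_def, I, Ideal.mem_span_singleton]
  split_ifs with hi hj
  · rw [hi, dvd_sub_comm]
  · rw [hj]
  · rw [sub_self]
    exact dvd_zero _

section CosetSpline

variable {n : ℕ} (Γ : SimpleGraph (Fin n)) (B : Finset (Fin n × Fin n))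

noncomputable def edgeProd : MvPolynomial (Fin n) ℂ :=
  ∏ p ∈ orderedEdges Γ \ B, (X p.1 - X p.2)

variable {Γ B}

theorem cosetSplineId_of_mem {u : Equiv.Perm (Fin n)} (hu : u ∈ edgeSubgroup B) :
    cosetSplineId Γ B u = rename u (edgeProd Γ B) := by
  simp only [cosetSplineId, hu, if_true, edgeProd, map_prod, map_sub, rename_X]

theorem cosetSplineId_of_not_mem {u : Equiv.Perm (Fin n)} (hu : u ∉ edgeSubgroup B) :
    cosetSplineId Γ B u = 0 :=
  if_neg hu

theorem dvd_cosetSplineId {q : MvPolynomial (Fin n) ℂ} {u : Equiv.Perm (Fin n)}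
    (h : q ∣ rename u (edgeProd Γ B)) : q ∣ cosetSplineId Γ B u := by
  by_cases hu : u ∈ edgeSubgroup B
  · rwa [cosetSplineId_of_mem hu]
  · rw [cosetSplineId_of_not_mem hu]
    exact dvd_zero _

theorem X_sub_X_dvd_edgeProd {i j : Fin n} (hij : Γ.Adj i j)
    (hs : Equiv.swap i j ∉ edgeSubgroup B) :
    (X i - X j : MvPolynomial (Fin n) ℂ) ∣ edgeProd Γ B := by
  wlog hlt : i < j generalizing i j
  · rw [← neg_sub, neg_dvd]
    exact this hij.symm (by rwa [Equiv.swap_comm])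
      (lt_of_le_of_ne (not_lt.1 hlt) hij.ne.symm)
  have hmem : (i, j) ∈ orderedEdges Γ \ B := by
    refine Finset.mem_sdiff.2 ⟨?_, fun hB => hs (Subgroup.subset_closure ⟨_, hB, rfl⟩)⟩
    simp [orderedEdges, hij, hlt]
  have h := Finset.dvd_prod_of_mem
    (fun p : Fin n × Fin n => (X p.1 - X p.2 : MvPolynomial (Fin n) ℂ)) hmem
  exact h

theorem cosetSplineId_isSpline : IsSpline Γ (cosetSplineId Γ B) := by
  intro u i j hij
  rw [Ideal.mem_span_singleton]
  set s := Equiv.swap i j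
  set P := edgeProd Γ B
  have hX : (X (u i) - X (u j) : MvPolynomial (Fin n) ℂ) = rename u (X i - X j) := by simp
  have hus : rename (u * s) P = rename u (rename s P) := by
    rw [rename_rename, Equiv.Perm.coe_mul]
  have hswap : (X i - X j : MvPolynomial (Fin n) ℂ) ∣ P - rename s P :=
    X_sub_X_dvd_sub_rename_swap i j P
  by_cases hs : s ∈ edgeSubgroup B
  · by_cases hu : u ∈ edgeSubgroup B
    · rw [cosetSplineId_of_mem hu, cosetSplineId_of_mem (mul_mem hu hs), hus, ← map_sub, hX]
      exact map_dvd _ hswap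
    · rw [cosetSplineId_of_not_mem hu,
        cosetSplineId_of_not_mem (mt (Subgroup.mul_mem_cancel_right _ hs).1 hu), sub_zero]
      exact dvd_zero _
  · have hP : (X i - X j : MvPolynomial (Fin n) ℂ) ∣ P := X_sub_X_dvd_edgeProd hij hs
    have hsP : (X i - X j : MvPolynomial (Fin n) ℂ) ∣ rename s P := by
      simpa using dvd_sub hP hswap
    refine dvd_sub (dvd_cosetSplineId ?_) (dvd_cosetSplineId ?_)
    · rw [hX]
      exact map_dvd _ hP
    · rw [hus, hX]
      exact map_dvd _ hsP

theorem IsSpline.dotAction {ρ : Equiv.Perm (Fin n) → MvPolynomial (Fin n) ℂ}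
    (hρ : IsSpline Γ ρ) (w : Equiv.Perm (Fin n)) : IsSpline Γ (_root_.dotAction w ρ) := by
  intro u i j hij
  have h := hρ (w⁻¹ * u) i j hij
  rw [Ideal.mem_span_singleton] at h ⊢
  simpa [_root_.dotAction, mul_assoc] using map_dvd (rename w) h

theorem dotAction_mul (w v : Equiv.Perm (Fin n))
    (ρ : Equiv.Perm (Fin n) → MvPolynomial (Fin n) ℂ) :
    dotAction (w * v) ρ = dotAction w (dotAction v ρ) := by
  funext x
  simp only [dotAction, rename_rename, mul_inv_rev, mul_assoc, Equiv.Perm.coe_mul]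

theorem dotAction_cosetSplineId_of_mem {u : Equiv.Perm (Fin n)} (hu : u ∈ edgeSubgroup B) :
    dotAction u (cosetSplineId Γ B) = cosetSplineId Γ B := by
  funext x
  by_cases hx : x ∈ edgeSubgroup B
  · rw [dotAction, cosetSplineId_of_mem (mul_mem (inv_mem hu) hx), cosetSplineId_of_mem hx,
      rename_rename, ← Equiv.Perm.coe_mul, mul_inv_cancel_left]
  · have hux : u⁻¹ * x ∉ edgeSubgroup B :=
      mt (Subgroup.mul_mem_cancel_left _ (inv_mem hu)).1 hx
    rw [dotAction, cosetSplineId_of_not_mem hux, cosetSplineId_of_not_mem hx, map_zero]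

end CosetSpline

theorem cosetSpline_isSpline_and_coset_invariant_general {n : ℕ} (Γ : SimpleGraph (Fin n))
    (B : Finset (Fin n × Fin n)) :
    (∀ w : Equiv.Perm (Fin n), IsSpline Γ (cosetSpline Γ w B)) ∧
    (∀ w v : Equiv.Perm (Fin n), w⁻¹ * v ∈ edgeSubgroup B →
      cosetSpline Γ w B = cosetSpline Γ v B) := by
  refine ⟨fun w => cosetSplineId_isSpline.dotAction w, fun w v hwv => ?_⟩
  calc cosetSpline Γ w B
      = dotAction w (dotAction (w⁻¹ * v) (cosetSplineId Γ B)) := by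
        rw [dotAction_cosetSplineId_of_mem hwv, cosetSpline]
    _ = cosetSpline Γ v B := by rw [← dotAction_mul, mul_inv_cancel_left, cosetSpline]

/-- If `Γ` is a tree, then (a) every coset spline `f̄_w^B` is a spline on `Γ`, and (b) the
coset spline depends only on the left coset: if `w⟨B⟩ = v⟨B⟩` then `f̄_w^B = f̄_v^B`. -/
theorem cosetSpline_isSpline_and_coset_invariant {n : ℕ} (Γ : SimpleGraph (Fin n))
    (hT : Γ.IsTree) (B : Finset (Fin n × Fin n)) (hB : B ⊆ orderedEdges Γ) :
    (∀ w : Equiv.Perm (Fin n), IsSpline Γ (cosetSpline Γ w B)) ∧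
    (∀ w v : Equiv.Perm (Fin n), w⁻¹ * v ∈ edgeSubgroup B →
      cosetSpline Γ w B = cosetSpline Γ v B) :=
  cosetSpline_isSpline_and_coset_invariant_general Γ B
end

section
/- Let Γ be a connected simple graph on [n]. (a) For every cut edge s = {i,j} of Γ with i < j, every choice of connected component G_s of the edge-deleted graph ([n], E(Γ)∖{s}), and every subset A ⊆ [n] with |A| = |V(G_s)|, the function f̄_A^s : S_n → ℂ[t] defined by f̄_A^s(w) = t_{w(i)} − t_{w(j)} if w⁻¹(A) = V(G_s) and 0 otherwise, is a spline on Γ. (b) For every cut vertex j of Γ, every connected component G of the induced subgraph Γ − j on [n]∖{j}, and every k ∈ [n], the function ȳ_{G,k}^j : S_n → ℂ[t] defined by ȳ_{G,k}^j(w) = t_k − t_{w(j)} if w⁻¹(k) ∈ G and 0 otherwise, is a spline on Γ. -/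
/-!
Splines are closed under subtraction and contain the constants and the maps `w ↦ t_{w(x)}`:
for `s = (a b)` the difference `t_{w(x)} - t_{w(s x)}` is `0` or `±(t_{w(a)} - t_{w(b)})`.
Cutting a spline `f` down to the permutations satisfying a property `P` keeps it a spline as long
as `f w` is divisible by `t_{w(a)} - t_{w(b)}` whenever `P` changes between `w` and `w (a b)`.
For `f̄` the property `w⁻¹(A) = G` can only change across the cut edge `{i, j}`, where the value
is `±(t_{w(a)} - t_{w(b)})`; for `ȳ` the property `w⁻¹(k) ∈ G` can only change across an edge
at `j` containing `u = w⁻¹(k)`, where the value `t_{w(u)} - t_{w(j)}` is `0` or the edge label.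
-/

open MvPolynomial

/-- The graph obtained from `Γ` by deleting all edges incident to the vertex `j`
(so that the connected components of `Γ − j` are exactly the components of this graph other
than the isolated vertex `j`). -/
def delVertexEdges {n : ℕ} (Γ : SimpleGraph (Fin n)) (j : Fin n) : SimpleGraph (Fin n) :=
  Γ.deleteEdges {e : Sym2 (Fin n) | j ∈ e}

open Classical in
/-- The spline `f̄_A^s` associated to a cut edge `s = {i,j}` (with `i < j`), a chosen
connected component `G` of the edge-deleted graph, and a set `A` with `|A| = |V(G)|`. -/
noncomputable def fbar {n : ℕ} (i j : Fin n) (A : Set (Fin n)) (G : Set (Fin n)) :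
    Equiv.Perm (Fin n) → MvPolynomial (Fin n) ℂ := fun w =>
  if (⇑w) ⁻¹' A = G then X (w i) - X (w j) else 0

open Classical in
/-- The spline `ȳ_{G,k}^j` associated to a cut vertex `j`, a connected component `G` of
`Γ − j`, and `k ∈ [n]`. -/
noncomputable def ybar {n : ℕ} (j k : Fin n) (G : Set (Fin n)) :
    Equiv.Perm (Fin n) → MvPolynomial (Fin n) ℂ := fun w =>
  if w⁻¹ k ∈ G then X k - X (w j) else 0

section Ring

variable {R α : Type*} [CommRing R] [DecidableEq α]

lemma sub_apply_swap_mem_span (f : α → R) (a b x : α) :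
    f x - f (Equiv.swap a b x) ∈ Ideal.span {f a - f b} := by
  rcases eq_or_ne x a with rfl | hxa
  · rw [Equiv.swap_apply_left]
    exact Ideal.mem_span_singleton_self _
  rcases eq_or_ne x b with rfl | hxb
  · rw [Equiv.swap_apply_right, ← neg_sub (f a)]
    exact neg_mem (Ideal.mem_span_singleton_self _)
  · rw [Equiv.swap_apply_of_ne_of_ne hxa hxb, sub_self]
    exact Ideal.zero_mem _

end Ring

namespace Equiv

variable {α : Type*} [DecidableEq α] {a b : α} {s : Set α}

lemma preimage_swap_eq_self (h : a ∈ s ↔ b ∈ s) : ⇑(swap a b) ⁻¹' s = s := by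
  ext x
  rcases eq_or_ne x a with rfl | hxa
  · simp [h]
  rcases eq_or_ne x b with rfl | hxb
  · simp [h]
  · simp [swap_apply_of_ne_of_ne hxa hxb]

lemma Perm.preimage_mul_swap_eq_iff (w : Perm α) (A : Set α) (h : a ∈ s ↔ b ∈ s) :
    ⇑(w * swap a b) ⁻¹' A = s ↔ ⇑w ⁻¹' A = s := by
  conv_lhs => rw [← preimage_swap_eq_self h]
  rw [Perm.coe_mul, Set.preimage_comp, Set.preimage_eq_preimage (swap a b).surjective]

end Equiv

namespace SimpleGraph

variable {V : Type*} {Γ H : SimpleGraph V} {v a b : V}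

lemma reachable_iff_of_adj (hab : H.Adj a b) : H.Reachable v a ↔ H.Reachable v b :=
  ⟨fun h => h.trans hab.reachable, fun h => h.trans hab.symm.reachable⟩

lemma eq_of_adj_of_not_reachable_deleteEdges_iff {e : Sym2 V} (hab : Γ.Adj a b)
    (h : ¬((Γ.deleteEdges {e}).Reachable v a ↔ (Γ.deleteEdges {e}).Reachable v b)) :
    s(a, b) = e := by
  by_contra hne
  exact h (reachable_iff_of_adj ((deleteEdges_adj ..).2 ⟨hab, hne⟩))

end SimpleGraph

section Spline

variable {n : ℕ} {Γ : SimpleGraph (Fin n)}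
  {f g : Equiv.Perm (Fin n) → MvPolynomial (Fin n) ℂ}

lemma isSpline_X_apply (Γ : SimpleGraph (Fin n)) (x : Fin n) :
    IsSpline Γ fun w => (X (w x) : MvPolynomial (Fin n) ℂ) := fun w a b _ =>
  sub_apply_swap_mem_span (fun y => X (w y)) a b x

lemma isSpline_const (Γ : SimpleGraph (Fin n)) (p : MvPolynomial (Fin n) ℂ) :
    IsSpline Γ fun _ => p := fun w a b _ => by
  rw [sub_self]
  exact Ideal.zero_mem _

lemma IsSpline.sub (hf : IsSpline Γ f) (hg : IsSpline Γ g) :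
    IsSpline Γ fun w => f w - g w := fun w a b hab => by
  rw [sub_sub_sub_comm]
  exact Ideal.sub_mem _ (hf w a b hab) (hg w a b hab)

lemma IsSpline.ite (hf : IsSpline Γ f) (P : Equiv.Perm (Fin n) → Prop) [DecidablePred P]
    (hP : ∀ w a b, Γ.Adj a b → ¬(P w ↔ P (w * Equiv.swap a b)) →
      f w ∈ Ideal.span {(X (w a) - X (w b) : MvPolynomial (Fin n) ℂ)}) :
    IsSpline Γ fun w => if P w then f w else 0 := fun w a b hab => by
  by_cases hw : P w <;> by_cases hws : P (w * Equiv.swap a b)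
  · simpa [hw, hws] using hf w a b hab
  · simpa [hw, hws] using hP w a b hab (by tauto)
  · have hfw := hP w a b hab (by tauto)
    simpa [hw, hws] using Ideal.sub_mem _ (hf w a b hab) hfw
  · simp [hw, hws]

lemma mem_of_adj_of_not_reachable_delVertexEdges_iff {j v a b : Fin n} (hab : Γ.Adj a b)
    (h : ¬((delVertexEdges Γ j).Reachable v a ↔ (delVertexEdges Γ j).Reachable v b)) :
    a = j ∨ b = j := by
  by_contra! hne
  refine h (SimpleGraph.reachable_iff_of_adj ((SimpleGraph.deleteEdges_adj ..).2 ⟨hab, ?_⟩))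
  simp [Sym2.mem_iff, hne.1.symm, hne.2.symm]

lemma isSpline_fbar (i j : Fin n) (A G : Set (Fin n))
    (hG : ∀ a b, Γ.Adj a b → ¬(a ∈ G ↔ b ∈ G) → s(a, b) = s(i, j)) :
    IsSpline Γ (fbar i j A G) := by
  have hf : IsSpline Γ fun w => X (w i) - X (w j) :=
    (isSpline_X_apply Γ i).sub (isSpline_X_apply Γ j)
  refine hf.ite (fun w => (⇑w) ⁻¹' A = G) fun w a b hab hP => ?_
  have hcut := hG a b hab fun hs => hP (Equiv.Perm.preimage_mul_swap_eq_iff w A hs).symm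
  have hj : j = Equiv.swap a b i := by
    rcases Sym2.eq_iff.1 hcut with ⟨rfl, rfl⟩ | ⟨rfl, rfl⟩ <;> simp
  rw [hj]
  exact sub_apply_swap_mem_span (fun y => X (w y)) a b i

lemma isSpline_ybar (j k : Fin n) (G : Set (Fin n))
    (hG : ∀ a b, Γ.Adj a b → ¬(a ∈ G ↔ b ∈ G) → a = j ∨ b = j) :
    IsSpline Γ (ybar j k G) := by
  classical
  have hf : IsSpline Γ fun w => X k - X (w j) :=
    (isSpline_const Γ (X k)).sub (isSpline_X_apply Γ j)
  refine hf.ite (fun w => w⁻¹ k ∈ G) fun w a b hab hP => ?_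
  set u := w⁻¹ k with hu
  have hu' : (w * Equiv.swap a b)⁻¹ k = Equiv.swap a b u := by
    simp [hu, mul_inv_rev, Equiv.swap_inv]
  rw [hu'] at hP
  have hmoved : Equiv.swap a b u ≠ u := fun h => hP (by rw [h])
  have hadj : Γ.Adj u (Equiv.swap a b u) := by
    obtain ⟨-, rfl | rfl⟩ := Equiv.swap_apply_ne_self_iff.1 hmoved
    · simpa using hab
    · simpa using hab.symm
  have hk : (X k : MvPolynomial (Fin n) ℂ) = X (w u) := by simp [hu]
  rcases hG _ _ hadj hP with h | h
  · rw [hk, h, sub_self]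
    exact Ideal.zero_mem _
  · rw [hk, ← h]
    exact sub_apply_swap_mem_span (fun y => X (w y)) a b u

end Spline

theorem fbar_ybar_isSpline_general {n : ℕ} (Γ : SimpleGraph (Fin n)) :
    (∀ i j : Fin n, i < j → Γ.Adj i j →
      ¬ (Γ.deleteEdges {s(i, j)}).Connected →
      ∀ v₀ : Fin n, ∀ A : Set (Fin n),
        A.ncard = {y | (Γ.deleteEdges {s(i, j)}).Reachable v₀ y}.ncard →
        IsSpline Γ (fbar i j A {y | (Γ.deleteEdges {s(i, j)}).Reachable v₀ y})) ∧
    (∀ j : Fin n, ¬ (Γ.induce ({j}ᶜ : Set (Fin n))).Connected →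
      ∀ v₀ : Fin n, v₀ ≠ j → ∀ k : Fin n,
        IsSpline Γ (ybar j k {y | (delVertexEdges Γ j).Reachable v₀ y})) :=
  ⟨fun i j _ _ _ _ A _ => isSpline_fbar i j A _ fun _ _ =>
      SimpleGraph.eq_of_adj_of_not_reachable_deleteEdges_iff,
    fun j _ _ _ k => isSpline_ybar j k _ fun _ _ =>
      mem_of_adj_of_not_reachable_delVertexEdges_iff⟩

/-- For a connected graph `Γ` on `[n]`:
(a) for every cut edge `{i,j}` (`i < j`), every connected component `G` of the edge-deleted
graph (the component of any vertex `v₀`), and every `A ⊆ [n]` with `|A| = |G|`, the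
function `f̄_A^{(i,j)}` is a spline on `Γ`; and
(b) for every cut vertex `j`, every connected component `G` of `Γ − j` (the component of
any vertex `v₀ ≠ j`), and every `k`, the function `ȳ_{G,k}^j` is a spline on `Γ`. -/
theorem fbar_ybar_isSpline {n : ℕ} (Γ : SimpleGraph (Fin n)) (hΓ : Γ.Connected) :
    (∀ i j : Fin n, i < j → Γ.Adj i j →
      ¬ (Γ.deleteEdges {s(i, j)}).Connected →
      ∀ v₀ : Fin n, ∀ A : Set (Fin n),
        A.ncard = {y | (Γ.deleteEdges {s(i, j)}).Reachable v₀ y}.ncard →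
        IsSpline Γ (fbar i j A {y | (Γ.deleteEdges {s(i, j)}).Reachable v₀ y})) ∧
    (∀ j : Fin n, ¬ (Γ.induce ({j}ᶜ : Set (Fin n))).Connected →
      ∀ v₀ : Fin n, v₀ ≠ j → ∀ k : Fin n,
        IsSpline Γ (ybar j k {y | (delVertexEdges Γ j).Reachable v₀ y})) :=
  fbar_ybar_isSpline_general Γ
end

section
/- Let Γ be a connected simple graph on [n]. The following relations hold among splines on Γ (all sums of splines taken pointwise): (1) Σ_{r=1}^n x̄_r = Σ_{r=1}^n t̄_r. (2) If {i,j} is a cut edge of Γ with i < j and G_{(i,j)} is the connected component of ([n], E(Γ)∖{{i,j}}) containing i, then Σ_A f̄_A^{(i,j)} = x̄_i − x̄_j, the sum over all A ⊆ [n] with |A| = |V(G_{(i,j)})|. (3) If j is a cut vertex of Γ and G is a connected component of Γ − j, then Σ_{k=1}^n ȳ_{G,k}^j = (Σ_{r ∈ V(G)} x̄_r) − |V(G)|·x̄_j. (4) If j is a cut vertex of Γ and k ∈ [n] is fixed, then Σ_G ȳ_{G,k}^j = t̄_k − x̄_j, the sum over all connected components G of Γ − j. -/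
open MvPolynomial

/-- The spline with constant value `t_i`. -/
noncomputable def tbar {n : ℕ} (i : Fin n) :
    Equiv.Perm (Fin n) → MvPolynomial (Fin n) ℂ := fun _ => X i

/-- The spline `x̄_i : w ↦ t_{w(i)}`. -/
noncomputable def xbar {n : ℕ} (i : Fin n) :
    Equiv.Perm (Fin n) → MvPolynomial (Fin n) ℂ := fun w => X (w i)

/-
Each relation is checked pointwise at a permutation `w`. Reindexing by `w` turns
`Σ_r t_{w(r)}` into `Σ_r t_r`, and `Σ_k ȳ_{G,k}^j(w)` into `Σ_{r ∈ G} (t_{w(r)} − t_{w(j)})`.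
In the sum of the `f̄_A` exactly one term survives, `A = w(G)`. In the sum of the `ȳ_{G,k}^j`
over the components `G` of `Γ − j`, at most the component containing `w⁻¹(k)` contributes;
there is none exactly when `w⁻¹(k) = j`, and then `t_k − t_{w(j)} = 0` as well.
-/

theorem sum_xbar_eq_sum_tbar (n : ℕ) : ∑ r : Fin n, xbar r = ∑ r : Fin n, tbar r := by
  funext w
  simp only [Finset.sum_apply, xbar, tbar]
  exact Equiv.sum_comp w X

open Classical in
theorem sum_fbar_eq_xbar_sub_xbar {n : ℕ} (i j : Fin n) (G : Set (Fin n)) :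
    ∑ A ∈ Finset.univ.filter (fun A : Finset (Fin n) => A.card = G.ncard), fbar i j (↑A) G =
      xbar i - xbar j := by
  funext w
  simp only [Finset.sum_apply, fbar, Pi.sub_apply, xbar]
  rw [Finset.sum_eq_single_of_mem (G.toFinset.image w)]
  · exact if_pos (by rw [Finset.coe_image, Set.coe_toFinset, Set.preimage_image_eq _ w.injective])
  · rw [Finset.mem_filter, Finset.card_image_of_injective _ w.injective,
      ← Set.ncard_eq_toFinset_card']
    exact ⟨Finset.mem_univ _, rfl⟩
  · intro A _ hne
    refine if_neg fun hAG => hne (Finset.coe_injective ?_)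
    rw [Finset.coe_image, Set.coe_toFinset, ← hAG, Set.image_preimage_eq _ w.surjective]

theorem sum_ybar_eq {n : ℕ} (j : Fin n) (G : Set (Fin n)) [Fintype G] :
    ∑ k : Fin n, ybar j k G = ∑ r ∈ G.toFinset, xbar r - G.ncard • xbar j := by
  classical
  funext w
  simp only [Finset.sum_apply, ybar, Pi.sub_apply, Pi.smul_apply, xbar]
  calc ∑ k, (if w⁻¹ k ∈ G then X k - X (w j) else 0)
      = ∑ r, (if r ∈ G then (X (w r) : MvPolynomial (Fin n) ℂ) - X (w j) else 0) :=
        Fintype.sum_equiv w.symm _ _ fun k => by simp [Equiv.Perm.inv_def]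
    _ = ∑ r ∈ G.toFinset, (X (w r) - X (w j)) := by
        rw [← Finset.sum_filter]
        congr 1
        ext r
        simp
    _ = _ := by
        rw [Finset.sum_sub_distrib, Finset.sum_const, Set.ncard_eq_toFinset_card' G]

theorem sum_ybar_eq_tbar_sub_xbar {n : ℕ} (j k : Fin n) (𝒢 : Finset (Set (Fin n)))
    (h_not_mem : ∀ G ∈ 𝒢, j ∉ G) (h_cover : ∀ v, v ≠ j → ∃! G, G ∈ 𝒢 ∧ v ∈ G) :
    ∑ G ∈ 𝒢, ybar j k G = tbar k - xbar j := by
  classical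
  funext w
  simp only [Finset.sum_apply, ybar, Pi.sub_apply, tbar, xbar]
  by_cases hj : w⁻¹ k = j
  · have hk : k = w j := by simp [← hj]
    rw [hk, sub_self]
    exact Finset.sum_eq_zero fun G hG => if_neg (by simpa using h_not_mem G hG)
  · obtain ⟨G, ⟨hG, hkG⟩, huniq⟩ := h_cover _ hj
    rw [Finset.sum_eq_single_of_mem G hG, if_pos hkG]
    exact fun G' hG' hne => if_neg fun hkG' => hne (huniq G' ⟨hG', hkG'⟩)

theorem eq_of_delVertexEdges_reachable {n : ℕ} (Γ : SimpleGraph (Fin n)) {j v : Fin n}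
    (h : (delVertexEdges Γ j).Reachable v j) : v = j := by
  obtain ⟨p⟩ := h.symm
  cases p with
  | nil => rfl
  | cons h _ =>
    rw [delVertexEdges, SimpleGraph.deleteEdges_adj] at h
    exact absurd (Sym2.mem_mk_left _ _) h.2

open Classical in
theorem spline_linear_relations_general {n : ℕ} (Γ : SimpleGraph (Fin n)) :
    ((∑ r : Fin n, xbar r) = ∑ r : Fin n, tbar r) ∧
    (∀ i j : Fin n, i < j → Γ.Adj i j →
      ¬ (Γ.deleteEdges {s(i, j)}).Connected →
      (∑ A ∈ Finset.univ.filter (fun A : Finset (Fin n) =>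
          A.card = {y | (Γ.deleteEdges {s(i, j)}).Reachable i y}.ncard),
        fbar i j (↑A) {y | (Γ.deleteEdges {s(i, j)}).Reachable i y}) =
      xbar i - xbar j) ∧
    (∀ j : Fin n, ¬ (Γ.induce ({j}ᶜ : Set (Fin n))).Connected →
      ∀ v₀ : Fin n, v₀ ≠ j →
      (∑ k : Fin n, ybar j k {y | (delVertexEdges Γ j).Reachable v₀ y}) =
        (∑ r ∈ ({y | (delVertexEdges Γ j).Reachable v₀ y} : Set (Fin n)).toFinset, xbar r)
          - ({y | (delVertexEdges Γ j).Reachable v₀ y} : Set (Fin n)).ncard • xbar j) ∧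
    (∀ j : Fin n, ¬ (Γ.induce ({j}ᶜ : Set (Fin n))).Connected →
      ∀ k : Fin n, ∀ 𝒢 : Finset (Set (Fin n)),
        (∀ G : Set (Fin n), G ∈ 𝒢 ↔
          ∃ v₀ : Fin n, v₀ ≠ j ∧ G = {y | (delVertexEdges Γ j).Reachable v₀ y}) →
        (∑ G ∈ 𝒢, ybar j k G) = tbar k - xbar j) := by
  refine ⟨sum_xbar_eq_sum_tbar n, fun i j _ _ _ => sum_fbar_eq_xbar_sub_xbar i j _,
    fun j _ v₀ _ => sum_ybar_eq j _, fun j _ k 𝒢 h𝒢 => ?_⟩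
  refine sum_ybar_eq_tbar_sub_xbar j k 𝒢 (fun G hG hjG => ?_) fun v hv => ?_
  · obtain ⟨v₀, hv₀, rfl⟩ := (h𝒢 G).mp hG
    exact hv₀ (eq_of_delVertexEdges_reachable Γ hjG)
  · refine ⟨_, ⟨(h𝒢 _).mpr ⟨v, hv, rfl⟩, SimpleGraph.Reachable.refl v⟩, ?_⟩
    rintro G ⟨hG, hvG⟩
    obtain ⟨v₀, -, rfl⟩ := (h𝒢 G).mp hG
    ext y
    exact ⟨hvG.symm.trans, hvG.trans⟩

open Classical in
/-- The four basic linear relations among the splines `t̄`, `x̄`, `f̄`, `ȳ` on a connected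
graph `Γ`:
(1) `Σ_r x̄_r = Σ_r t̄_r`;
(2) for a cut edge `{i,j}` (`i < j`) with `G` the component of the edge-deleted graph
containing `i`, `Σ_{|A| = |G|} f̄_A^{(i,j)} = x̄_i − x̄_j`;
(3) for a cut vertex `j` and a connected component `G` of `Γ − j`,
`Σ_k ȳ_{G,k}^j = (Σ_{r ∈ G} x̄_r) − |G|·x̄_j`;
(4) for a cut vertex `j` and fixed `k`, the sum of `ȳ_{G,k}^j` over all connected
components `G` of `Γ − j` equals `t̄_k − x̄_j`. -/
theorem spline_linear_relations {n : ℕ} (Γ : SimpleGraph (Fin n)) (hΓ : Γ.Connected) :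
    ((∑ r : Fin n, xbar r) = ∑ r : Fin n, tbar r) ∧
    (∀ i j : Fin n, i < j → Γ.Adj i j →
      ¬ (Γ.deleteEdges {s(i, j)}).Connected →
      (∑ A ∈ Finset.univ.filter (fun A : Finset (Fin n) =>
          A.card = {y | (Γ.deleteEdges {s(i, j)}).Reachable i y}.ncard),
        fbar i j (↑A) {y | (Γ.deleteEdges {s(i, j)}).Reachable i y}) =
      xbar i - xbar j) ∧
    (∀ j : Fin n, ¬ (Γ.induce ({j}ᶜ : Set (Fin n))).Connected →
      ∀ v₀ : Fin n, v₀ ≠ j →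
      (∑ k : Fin n, ybar j k {y | (delVertexEdges Γ j).Reachable v₀ y}) =
        (∑ r ∈ ({y | (delVertexEdges Γ j).Reachable v₀ y} : Set (Fin n)).toFinset, xbar r)
          - ({y | (delVertexEdges Γ j).Reachable v₀ y} : Set (Fin n)).ncard • xbar j) ∧
    (∀ j : Fin n, ¬ (Γ.induce ({j}ᶜ : Set (Fin n))).Connected →
      ∀ k : Fin n, ∀ 𝒢 : Finset (Set (Fin n)),
        (∀ G : Set (Fin n), G ∈ 𝒢 ↔
          ∃ v₀ : Fin n, v₀ ≠ j ∧ G = {y | (delVertexEdges Γ j).Reachable v₀ y}) →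
        (∑ G ∈ 𝒢, ybar j k G) = tbar k - xbar j) :=
  spline_linear_relations_general Γ
end
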